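/- Let G(n) denote the number of partitions of an n-element set all of whose blocks have at most 3 elements (so G(0)=1, G(1)=1, G(2)=2, G(3)=5, G(4)=14, G(5)=46, G(6)=166, …). Then, as formal power series over ℚ, ∑_{n≥0} G(n)·X^n/n! = exp(X + X²/2 + X³/6). -/

import Mathlib

/-!
Removing the block that contains a distinguished point shows that the number `G(n)` of
partitions of an `n`-set into blocks of size at most `m` satisfies
`G(n+1) = ∑_{j<m} C(n,j) G(n-j)`, i.e. its exponential generating function `E` solves
`E' = (1 + X + ⋯ + X^{m-1}/(m-1)!) E`. By the chain rule `exp(X + X²/2! + ⋯ + X^m/m!)` solves the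
same linear equation with the same constant term, and since it is invertible,
`(E / exp(⋯))' = 0` forces the two series to agree.
-/

/-- Composition `g ∘ T` of formal power series over `ℚ`, valid (equal to the usual
substitution) when `T` has zero constant term: the `k`-th coefficient is
`∑_{n ≤ k} (coeff n g) · (coeff k (T^n))`. -/
noncomputable def PowerSeries.comp (g T : PowerSeries ℚ) : PowerSeries ℚ :=
  PowerSeries.mk fun k =>
    ∑ n ∈ Finset.range (k + 1), PowerSeries.coeff n g * PowerSeries.coeff k (T ^ n)

open Finset PowerSeries Nat Setoid

def boundedPartitions (m : ℕ) (α : Type*) : Set (Set (Set α)) :=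
  {P | Setoid.IsPartition P ∧ ∀ b ∈ P, b.ncard ≤ m}

namespace Setoid.IsPartition

variable {α β : Type*}

theorem image_image (e : α ≃ β) {P : Set (Set α)} (hP : IsPartition P) :
    IsPartition ((e '' ·) '' P) := by
  refine ⟨fun ⟨s, hs, hse⟩ => hP.1 (Set.image_eq_empty.1 hse ▸ hs), fun b => ?_⟩
  obtain ⟨s, ⟨hsP, hbs⟩, hs_unique⟩ := hP.2 (e.symm b)
  refine ⟨e '' s, ⟨⟨s, hsP, rfl⟩, ⟨e.symm b, hbs, e.apply_symm_apply b⟩⟩, ?_⟩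
  rintro _ ⟨⟨t, htP, rfl⟩, hbt⟩
  rw [hs_unique t ⟨htP, by simpa [Equiv.image_eq_preimage_symm] using hbt⟩]

theorem image_image_iff (e : α ≃ β) {P : Set (Set α)} :
    IsPartition ((e '' ·) '' P) ↔ IsPartition P := by
  refine ⟨fun h => ?_, image_image e⟩
  simpa [Set.image_image, Equiv.symm_image_image] using h.image_image e.symm

variable {B : Set β} {P : Set (Set β)}

theorem subset_compl_of_ne (hP : IsPartition P) (hB : B ∈ P) {b : Set β}
    (hb : b ∈ P) (hne : b ≠ B) : b ⊆ Bᶜ :=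
  Set.subset_compl_iff_disjoint_right.2 (hP.pairwiseDisjoint hb hB hne)

theorem insert_image_val (hB : B.Nonempty) {Q : Set (Set ↥Bᶜ)} (hQ : IsPartition Q) :
    IsPartition (insert B ((Subtype.val '' ·) '' Q)) := by
  refine ⟨?_, fun x => ?_⟩
  · rintro (hBe | ⟨q, hq, hqe⟩)
    · exact hB.ne_empty hBe.symm
    · exact hQ.1 (Set.image_eq_empty.1 hqe ▸ hq)
  by_cases hx : x ∈ B
  · refine ⟨B, ⟨Set.mem_insert _ _, hx⟩, ?_⟩
    rintro _ ⟨rfl | ⟨q, -, rfl⟩, hxb⟩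
    · rfl
    · obtain ⟨y, -, rfl⟩ := hxb
      exact absurd hx y.2
  · obtain ⟨q, ⟨hqQ, hxq⟩, hq_unique⟩ := hQ.2 ⟨x, hx⟩
    refine ⟨Subtype.val '' q, ⟨Set.mem_insert_of_mem _ ⟨q, hqQ, rfl⟩, ⟨_, hxq, rfl⟩⟩, ?_⟩
    rintro _ ⟨rfl | ⟨q', hq'Q, rfl⟩, hxb⟩
    · exact absurd hxb hx
    · obtain ⟨y, hy, rfl⟩ := hxb
      rw [hq_unique q' ⟨hq'Q, hy⟩]

theorem setOf_image_val_mem (hP : IsPartition P) (hB : B ∈ P) :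
    IsPartition {q : Set ↥Bᶜ | Subtype.val '' q ∈ P} := by
  refine ⟨fun h => hP.1 (by simpa using h), fun x => ?_⟩
  obtain ⟨b, ⟨hbP, hxb⟩, hb_unique⟩ := hP.2 x
  have hbB : b ⊆ Bᶜ := hP.subset_compl_of_ne hB hbP fun h => x.2 (h ▸ hxb)
  refine ⟨Subtype.val ⁻¹' b, ⟨?_, hxb⟩, ?_⟩
  · rwa [Set.mem_ofPred_eq, Subtype.image_preimage_coe, Set.inter_eq_right.2 hbB]
  · rintro q ⟨hqP, hxq⟩
    rw [← hb_unique _ ⟨hqP, ⟨x, hxq, rfl⟩⟩, Set.preimage_image_eq _ Subtype.val_injective]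

end Setoid.IsPartition

section

variable {α β : Type*} {m : ℕ}

theorem card_boundedPartitions_congr (e : α ≃ β) :
    Nat.card (boundedPartitions m α) = Nat.card (boundedPartitions m β) := by
  refine Nat.card_congr (Equiv.subtypeEquiv (Equiv.Set.congr (Equiv.Set.congr e)) fun P => ?_)
  change IsPartition P ∧ _ ↔ IsPartition ((e '' ·) '' P) ∧ ∀ b ∈ (e '' ·) '' P, b.ncard ≤ m
  simp [IsPartition.image_image_iff, Set.ncard_image_of_injective _ e.injective]

theorem card_boundedPartitions_of_isEmpty [IsEmpty α] : Nat.card (boundedPartitions m α) = 1 := by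
  have hP : ∀ P ∈ boundedPartitions m α, P = ∅ := fun P hP =>
    Set.eq_empty_of_forall_notMem fun b hb => hP.1.1 (Subsingleton.elim b ∅ ▸ hb)
  refine Nat.card_eq_one_iff_unique.2 ⟨⟨fun P Q => Subtype.ext ((hP P P.2).trans (hP Q Q.2).symm)⟩,
    ⟨⟨∅, ⟨by simp, isEmptyElim⟩, by simp⟩⟩⟩

variable {B : Set β}

def boundedPartitionsWithBlockEquiv (hB : B.Nonempty) (hBm : B.ncard ≤ m) :
    {P // P ∈ boundedPartitions m β ∧ B ∈ P} ≃ boundedPartitions m ↥Bᶜ where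
  toFun P := ⟨{q | Subtype.val '' q ∈ P.1}, P.2.1.1.setOf_image_val_mem P.2.2, fun q hq => by
    simpa [Set.ncard_image_of_injective _ Subtype.val_injective] using P.2.1.2 _ hq⟩
  invFun Q := ⟨insert B ((Subtype.val '' ·) '' Q.1), ⟨Q.2.1.insert_image_val hB, by
    rintro _ (rfl | ⟨q, hq, rfl⟩)
    · exact hBm
    · simpa [Set.ncard_image_of_injective _ Subtype.val_injective] using Q.2.2 q hq⟩,
    Set.mem_insert _ _⟩
  left_inv := by
    rintro ⟨P, ⟨hP, -⟩, hBP⟩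
    ext b
    refine ⟨?_, fun hb => ?_⟩
    · rintro (hb | ⟨q, hq, rfl⟩)
      exacts [hb.symm ▸ hBP, hq]
    by_cases hbB : b = B
    · exact Or.inl hbB
    · refine Set.mem_insert_of_mem _ ⟨Subtype.val ⁻¹' b, ?_, ?_⟩ <;>
        simp [Subtype.image_preimage_coe, Set.inter_eq_right.2
          (hP.subset_compl_of_ne hBP hb hbB), hb]
  right_inv := by
    rintro ⟨Q, -⟩
    ext q
    refine ⟨?_, fun hq => Set.mem_insert_of_mem _ ⟨q, hq, rfl⟩⟩
    rintro (hqB | ⟨q', hq', hqq'⟩)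
    · obtain ⟨x, hx⟩ := hB
      obtain ⟨y, -, rfl⟩ := hqB.symm ▸ hx
      exact absurd hx y.2
    · rwa [← Set.image_injective.2 Subtype.val_injective hqq']

theorem card_boundedPartitions_with_block (hB : B.Nonempty) :
    Nat.card {P // P ∈ boundedPartitions m β ∧ B ∈ P} =
      if B.ncard ≤ m then Nat.card (boundedPartitions m ↥Bᶜ) else 0 := by
  split_ifs with hBm
  · exact Nat.card_congr (boundedPartitionsWithBlockEquiv hB hBm)
  · have : IsEmpty {P // P ∈ boundedPartitions m β ∧ B ∈ P} := ⟨fun P => hBm (P.2.1.2 B P.2.2)⟩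
    exact Nat.card_of_isEmpty

end

section

variable {α : Type*} [Fintype α] {m : ℕ}

theorem card_boundedPartitions_option :
    Nat.card (boundedPartitions m (Option α)) =
      ∑ s : Finset α, Nat.card {P // P ∈ boundedPartitions m (Option α) ∧ ↑s.insertNone ∈ P} := by
  classical
  rw [← Nat.card_sigma]
  refine (Nat.card_congr (Equiv.ofBijective (fun P => ⟨P.2.1, P.2.2.1⟩) ⟨?_, ?_⟩)).symm
  · rintro ⟨s, P, hP, hsP⟩ ⟨t, P', hP', htP'⟩ hPP'
    obtain rfl : P = P' := congrArg Subtype.val hPP'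
    obtain rfl : s = t := Finset.insertNone.injective <| Finset.coe_injective <|
      hP.1.2 none |>.unique ⟨hsP, by simp⟩ ⟨htP', by simp⟩
    rfl
  · rintro ⟨P, hP⟩
    obtain ⟨b, ⟨hbP, hnone⟩, -⟩ := hP.1.2 none
    have hb : ↑(univ.filter fun x => some x ∈ b).insertNone = b := by
      ext (_ | x) <;> simp [hnone]
    exact ⟨⟨_, P, hP, hb ▸ hbP⟩, rfl⟩

theorem card_boundedPartitions_fin_succ (n : ℕ) :
    Nat.card (boundedPartitions m (Fin (n + 1))) = ∑ j ∈ range (n + 1),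
      if j < m then n.choose j * Nat.card (boundedPartitions m (Fin (n - j))) else 0 := by
  classical
  have hterm (s : Finset (Fin n)) :
      Nat.card {P // P ∈ boundedPartitions m (Option (Fin n)) ∧ ↑s.insertNone ∈ P} =
        if s.card < m then Nat.card (boundedPartitions m (Fin (n - s.card))) else 0 := by
    have hcard : (↑s.insertNone : Set (Option (Fin n))).ncard = s.card + 1 := by
      rw [Set.ncard_coe_finset, Finset.card_insertNone]
    have hcompl : Nat.card ↥(↑s.insertNone : Set (Option (Fin n)))ᶜ = n - s.card := by
      rw [Nat.card_coe_set_eq, Set.ncard_compl, hcard, Nat.card_eq_fintype_card]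
      simp
    rw [card_boundedPartitions_with_block ⟨none, by simp⟩, hcard,
      card_boundedPartitions_congr (Finite.equivFin _), hcompl]
    simp only [Nat.add_one_le_iff]
  rw [card_boundedPartitions_congr (finSuccEquiv n), card_boundedPartitions_option,
    Fintype.sum_congr _ _ hterm, ← Finset.powerset_univ,
    sum_powerset_apply_card
      (fun j => if j < m then Nat.card (boundedPartitions m (Fin (n - j))) else 0),
    Finset.card_univ, Fintype.card_fin]
  simp only [smul_eq_mul, mul_ite, mul_zero]

end

namespace PowerSeries

theorem eq_of_derivative_eq_mul {K : Type*} [Field K] [CharZero K] {f g a : K⟦X⟧}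
    (hf : d⁄dX K f = f * a) (hg : d⁄dX K g = g * a) (hg0 : constantCoeff g ≠ 0)
    (h0 : constantCoeff f = constantCoeff g) : f = g := by
  have hg' : g⁻¹ * g = 1 := PowerSeries.inv_mul_cancel g hg0
  have hquot : f * g⁻¹ = 1 := by
    refine derivative.ext ?_ ?_
    · rw [Derivation.leibniz, derivative_inv', hf, hg, derivative_one]
      linear_combination (-(f * g⁻¹ * a)) * hg'
    · simp [h0, hg0]
  calc f = f * g⁻¹ * g := by rw [mul_assoc, hg', mul_one]
    _ = g := by rw [hquot, one_mul]

theorem coeff_pow_eq_zero_of_lt {R : Type*} [CommRing R] {T : R⟦X⟧} (hT : constantCoeff T = 0)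
    {k n : ℕ} (h : k < n) : coeff k (T ^ n) = 0 :=
  X_pow_dvd_iff.1 (pow_dvd_pow_of_dvd (X_dvd_iff.2 hT) n) k h

theorem comp_eq_subst {g T : ℚ⟦X⟧} (hT : constantCoeff T = 0) : g.comp T = g.subst T := by
  ext k
  rw [comp, coeff_mk, coeff_subst' (HasSubst.of_constantCoeff_zero' hT),
    finsum_eq_sum_of_support_subset (s := range (k + 1))]
  · simp only [smul_eq_mul]
  · intro n hn
    by_contra hnk
    have hkn : k < n := by simpa using hnk
    simp [coeff_pow_eq_zero_of_lt hT hkn] at hn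

theorem derivative_mk_div_factorial_of_sum_choose {a : ℕ → ℚ} {m : ℕ}
    (h : ∀ k, a (k + 1) = ∑ j ∈ range (k + 1), if j < m then (k.choose j : ℚ) * a (k - j) else 0) :
    d⁄dX ℚ (mk fun n => a n / n !) = (mk fun n => a n / n !) * trunc m (exp ℚ) := by
  ext k
  rw [coeff_derivative, coeff_mul, ← Nat.sum_antidiagonal_swap]
  simp only [Prod.fst_swap, Prod.snd_swap]
  rw [Nat.sum_antidiagonal_eq_sum_range_succ (fun j i => coeff i (mk fun n => a n / n !) *
      coeff j (trunc m (exp ℚ) : ℚ⟦X⟧)), coeff_mk, h, sum_div, sum_mul]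
  refine sum_congr rfl fun j hj => ?_
  have hjk : j ≤ k := Nat.lt_succ_iff.1 (mem_range.1 hj)
  simp only [coeff_mk, Polynomial.coeff_coe, coeff_trunc, coeff_exp]
  split_ifs
  · rw [Nat.cast_choose ℚ hjk, Nat.factorial_succ]
    push_cast
    field_simp
  · simp

theorem mk_div_factorial_eq_exp_subst {a : ℕ → ℚ} {m : ℕ} (h0 : a 0 = 1)
    (h : ∀ k, a (k + 1) = ∑ j ∈ range (k + 1), if j < m then (k.choose j : ℚ) * a (k - j) else 0) :
    (mk fun n => a n / n !) = (exp ℚ).subst ((trunc (m + 1) (exp ℚ) : ℚ⟦X⟧) - 1) := by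
  set T : ℚ⟦X⟧ := (trunc (m + 1) (exp ℚ) : ℚ⟦X⟧) - 1
  have hT0 : constantCoeff T = 0 := by
    rw [← coeff_zero_eq_constantCoeff_apply]
    simp [T, coeff_trunc]
  have hT : d⁄dX ℚ T = trunc m (exp ℚ) := by
    rw [map_sub, derivative_one, sub_zero, derivative_coe, ← trunc_derivative, derivative_exp]
  have hsubst0 : constantCoeff ((exp ℚ).subst T) = 1 := by
    rw [← comp_eq_subst hT0, ← coeff_zero_eq_constantCoeff_apply]
    simp [comp]
  refine eq_of_derivative_eq_mul (derivative_mk_div_factorial_of_sum_choose h) ?_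
    (by simp [hsubst0]) ?_
  · rw [derivative_subst (HasSubst.of_constantCoeff_zero' hT0), derivative_exp, hT]
  · rw [hsubst0, ← coeff_zero_eq_constantCoeff_apply]
    simp [h0]

end PowerSeries

theorem mk_card_boundedPartitions_div_factorial (m : ℕ) :
    (mk fun n => (Nat.card (boundedPartitions m (Fin n)) : ℚ) / n !) =
      (exp ℚ).subst ((trunc (m + 1) (exp ℚ) : ℚ⟦X⟧) - 1) := by
  refine mk_div_factorial_eq_exp_subst (by rw [card_boundedPartitions_of_isEmpty]; simp) fun k => ?_
  exact_mod_cast card_boundedPartitions_fin_succ k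

/-- The exponential generating function of the numbers of partitions of an `n`-element set
into blocks of size at most 3 is `exp(X + X²/2 + X³/6)`. -/
theorem stmt10 (G : ℕ → ℕ)
    (hG : ∀ n : ℕ, G n = Nat.card
      {P : Set (Set (Fin n)) // Setoid.IsPartition P ∧ ∀ b ∈ P, b.ncard ≤ 3}) :
    (PowerSeries.mk fun n => (G n : ℚ) / (n.factorial : ℚ)) =
      PowerSeries.comp (PowerSeries.exp ℚ)
        (PowerSeries.X + PowerSeries.C (1 / 2) * PowerSeries.X ^ 2 +
          PowerSeries.C (1 / 6) * PowerSeries.X ^ 3) := by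
  have hT : (X + C (1 / 2) * X ^ 2 + C (1 / 6) * X ^ 3 : ℚ⟦X⟧) = trunc 4 (exp ℚ) - 1 := by
    ext n
    rcases n with _ | _ | _ | _ | n <;>
      simp [coeff_trunc, coeff_X, coeff_X_pow, Nat.factorial]
  have hG' : ∀ n, G n = Nat.card (boundedPartitions 3 (Fin n)) := hG
  rw [hT, comp_eq_subst (by simp [← hT]), ← mk_card_boundedPartitions_div_factorial]
  simp only [hG']
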